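/- arXiv:2212.12625 — 3 statements merged into one kernel-verified Lean document; each statement's English description precedes it below -/
import Mathlib

section
/- Let $K$ be a field and $f_0,\dots,f_{n-1} \in K[z_1,\dots,z_n]$ be symmetric polynomials (invariant under all permutations of the variables). If $\sum_{a=0}^{n-1} f_a z_1^a = 0$, then $f_0 = f_1 = \cdots = f_{n-1} = 0$. -/
open MvPolynomial

/-- If symmetric polynomials `f 0, …, f (n-1)` in `K[z_1,…,z_n]` satisfy
`∑ a, f a * z_1 ^ a = 0`, then all `f a = 0`. -/
theorem stmt_1 (K : Type*) [Field K] (n : ℕ) (hn : 0 < n)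
    (f : Fin n → MvPolynomial (Fin n) K)
    (hf : ∀ a, (f a).IsSymmetric)
    (h : ∑ a : Fin n, f a * (X (⟨0, hn⟩ : Fin n)) ^ (a : ℕ) = 0) :
    ∀ a, f a = 0 := by
  classical
  set P : Polynomial (MvPolynomial (Fin n) K) :=
    ∑ a : Fin n, Polynomial.C (f a) * Polynomial.X ^ (a : ℕ) with hP
  have heval : ∀ i : Fin n, P.eval (X i) = 0 := by
    intro i
    have := congrArg (rename (Equiv.swap (⟨0, hn⟩ : Fin n) i)) h
    simp only [map_sum, map_mul, map_pow, rename_X, map_zero] at this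
    rw [Equiv.swap_apply_left] at this
    simp only [hP, Polynomial.eval_finset_sum, Polynomial.eval_mul, Polynomial.eval_pow,
      Polynomial.eval_C, Polynomial.eval_X]
    simpa only [fun a => hf a (Equiv.swap (⟨0, hn⟩ : Fin n) i)] using this
  have hdeg : P.natDegree < n := by
    have : P.natDegree ≤ n - 1 := by
      apply Polynomial.natDegree_sum_le_of_forall_le
      intro a _
      refine (Polynomial.natDegree_C_mul_le _ _).trans ?_
      rw [Polynomial.natDegree_X_pow]
      omega
    omega
  have hPz : P = 0 :=
    Polynomial.eq_zero_of_natDegree_lt_card_of_eval_eq_zero P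
      (MvPolynomial.X_injective) heval (by simpa using hdeg)
  intro a
  have := congrArg (fun q => Polynomial.coeff q (a : ℕ)) hPz
  simp only [hP, Polynomial.finset_sum_coeff, Polynomial.coeff_C_mul,
    Polynomial.coeff_X_pow, Polynomial.coeff_zero, mul_ite, mul_one, mul_zero] at this
  have e : ∀ x : Fin n, (if (a : ℕ) = (x : ℕ) then f x else 0) = if a = x then f x else 0 := by
    intro x; simp [Fin.ext_iff]
  simp_rw [e, Finset.sum_ite_eq] at this
  simpa using this
end

section
/- Let $K$ be a field, $\zeta \in K^\times$, and consider generators $\tilde\xi_{rs}$ for $1\le r<s\le n$ subject to the relations: $\tilde\xi_{rs}\tilde\xi_{rs'} = \zeta\tilde\xi_{rs'}\tilde\xi_{rs}$ for $r<s<s'$; $\tilde\xi_{rs}\tilde\xi_{r's} = \zeta\tilde\xi_{r's}\tilde\xi_{rs}$ for $r<r'<s$; $\tilde\xi_{rs}\tilde\xi_{r's'} = \tilde\xi_{r's'}\tilde\xi_{rs}$ for $r<r'<s'<s$ and for $r<s<r'<s'$; $\tilde\xi_{rs}\tilde\xi_{ss'} = \tilde\xi_{ss'}\tilde\xi_{rs}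 + (\zeta-\zeta^{-1})\tilde\xi_{rs'}$ for $r<s<s'$; and $\tilde\xi_{rs}\tilde\xi_{r's'} = \tilde\xi_{r's'}\tilde\xi_{rs} + (\zeta-\zeta^{-1})\tilde\xi_{r's}\tilde\xi_{rs'}$ for $r<r'<s<s'$. Then the monomials, taken in the fixed order where the factors $\tilde\xi_{rs}$ are arranged with first index $r$ decreasing from $n-1$ to $1$ and, within each fixed $r$, second index $s$ increasing, span the algebra generated by the $\tilde\xi_{rs}$ over $K$. -/
/-- The ordered monomial `ξ̃_{n-1,n}^{a_{n-1,n}} (ξ̃_{n-2,n-1}^{a_{n-2,n-1}} ξ̃_{n-2,n}^{a_{n-2,n}})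
⋯ (ξ̃_{12}^{a_{12}} ⋯ ξ̃_{1n}^{a_{1n}})`: factors with first index `r` decreasing and, for
fixed `r`, second index `s` increasing. -/
noncomputable def orderedXiMono {A : Type*} [Ring A] {n : ℕ}
    (ξ : Fin n → Fin n → A) (a : Fin n → Fin n → ℕ) : A :=
  (((List.finRange n).reverse).map (fun r =>
      (((List.finRange n).filter (fun s => r < s)).map (fun s => ξ r s ^ a r s)).prod)).prod

/-!
Order the generators by `key` (first index decreasing, then second index increasing), so that
the ordered monomials are exactly the products of sorted words. Each defining relation rewrites
an out-of-order adjacent pair `ξ_a ξ_b` as a scalar multiple of `ξ_b ξ_a`, plus (for the last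
two relations) a scalar multiple of a single generator or of a pair that is lexicographically
smaller than `(a, b)`. All the resulting words are smaller than the original one in the
shortlex order, which is well founded, so induction on it brings every word into the span of
the sorted ones.
-/

theorem List.exists_eq_append_of_not_isChain {α : Type*} {R : α → α → Prop} {l : List α}
    (h : ¬ l.IsChain R) : ∃ u a b v, l = u ++ a :: b :: v ∧ ¬ R a b := by
  obtain ⟨i, hi, hR⟩ : ∃ i, ∃ hi : i + 1 < l.length, ¬ R l[i] l[i + 1] := by
    simpa [List.isChain_iff_getElem] using h
  refine ⟨l.take i, l[i], l[i + 1], l.drop (i + 2), ?_, hR⟩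
  rw [← List.drop_eq_getElem_cons, ← List.drop_eq_getElem_cons, List.take_append_drop]

theorem List.Lex.append_right_of_length_eq {α : Type*} {r : α → α → Prop} {x y : List α}
    (hlen : x.length = y.length) (h : List.Lex r x y) (v : List α) :
    List.Lex r (x ++ v) (y ++ v) := by
  induction h with
  | nil => simp at hlen
  | cons _ ih => exact .cons (ih (by simpa using hlen))
  | rel h => exact .rel h

theorem List.Shortlex.append_right_same {α : Type*} {r : α → α → Prop} {x y : List α}
    (h : List.Shortlex r x y) (v : List α) : List.Shortlex r (x ++ v) (y ++ v) := by
  rcases List.shortlex_def.1 h with hlen | ⟨hlen, hlex⟩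
  · exact .of_length_lt (by simpa using hlen)
  · exact .of_lex (by simp [hlen]) (hlex.append_right_of_length_eq hlen v)

namespace QuantumUnipotent

variable {n : ℕ}

def key (p : Fin n × Fin n) : Lex ((Fin n)ᵒᵈ × Fin n) := toLex (OrderDual.toDual p.1, p.2)

lemma key_injective : Function.Injective (key (n := n)) := by
  intro p q h
  simpa [key, Prod.ext_iff] using h

lemma key_lt_key_iff {p q : Fin n × Fin n} :
    key p < key q ↔ q.1 < p.1 ∨ p.1 = q.1 ∧ p.2 < q.2 := by
  simp [key, Prod.Lex.toLex_lt_toLex]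

lemma wellFounded_key_lt : WellFounded fun p q : Fin n × Fin n => key p < key q :=
  InvImage.wf key Finite.to_wellFoundedLT.wf

def letters (n : ℕ) : List (Fin n × Fin n) :=
  (List.finRange n).reverse.flatMap fun r => ((List.finRange n).filter (r < ·)).map (r, ·)

lemma mem_letters {p : Fin n × Fin n} : p ∈ letters n ↔ p.1 < p.2 := by
  simp only [letters, List.mem_flatMap, List.mem_reverse, List.mem_finRange, List.mem_map,
    List.mem_filter, decide_eq_true_eq, true_and]
  exact ⟨fun ⟨_, _, h, e⟩ => e ▸ h, fun h => ⟨_, _, h, rfl⟩⟩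

lemma pairwise_key_lt_letters : (letters n).Pairwise (key · < key ·) := by
  simp only [letters, List.pairwise_flatMap, List.pairwise_reverse, List.pairwise_map]
  refine ⟨fun r _ => ((List.pairwise_lt_finRange n).filter _).imp ?_,
    (List.pairwise_lt_finRange n).imp ?_⟩
  · intro s s' h
    exact key_lt_key_iff.2 (Or.inr ⟨rfl, h⟩)
  · intro r r' h x hx y hy
    simp only [List.mem_map, List.mem_filter] at hx hy
    obtain ⟨s, -, rfl⟩ := hx
    obtain ⟨s', -, rfl⟩ := hy
    exact key_lt_key_iff.2 (Or.inl h)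

lemma count_flatMap_replicate {α : Type*} [BEq α] [LawfulBEq α] {l : List α} (hl : l.Nodup)
    (c : α → ℕ) (p : α) :
    (l.flatMap fun q => List.replicate (c q) q).count p = if p ∈ l then c p else 0 := by
  classical
  rw [List.count_flatMap, ← List.sum_toFinset _ hl]
  simp [List.count_replicate]

def canonWord (a : Fin n → Fin n → ℕ) : List (Fin n × Fin n) :=
  (letters n).flatMap fun p => List.replicate (a p.1 p.2) p

lemma count_canonWord (a : Fin n → Fin n → ℕ) (p : Fin n × Fin n) :
    (canonWord a).count p = if p.1 < p.2 then a p.1 p.2 else 0 := by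
  rw [canonWord, count_flatMap_replicate pairwise_key_lt_letters.nodup]
  simp only [mem_letters]

lemma pairwise_canonWord (a : Fin n → Fin n → ℕ) :
    (canonWord a).Pairwise (key · ≤ key ·) := by
  refine List.pairwise_flatMap.2 ⟨fun p _ => List.pairwise_replicate.2 (Or.inr le_rfl),
    pairwise_key_lt_letters.imp ?_⟩
  intro p q h x hx y hy
  rw [List.eq_of_mem_replicate hx, List.eq_of_mem_replicate hy]
  exact h.le

def IsWord (w : List (Fin n × Fin n)) : Prop := ∀ p ∈ w, p.1 < p.2

lemma isWord_append {u v : List (Fin n × Fin n)} : IsWord (u ++ v) ↔ IsWord u ∧ IsWord v :=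
  List.forall_mem_append

lemma isWord_canonWord (a : Fin n → Fin n → ℕ) : IsWord (canonWord a) := by
  intro p hp
  obtain ⟨q, hq, hpq⟩ := List.mem_flatMap.1 hp
  exact List.eq_of_mem_replicate hpq ▸ mem_letters.1 hq

lemma eq_canonWord_of_pairwise {w : List (Fin n × Fin n)} (hw : IsWord w)
    (hsorted : w.Pairwise (key · ≤ key ·)) :
    w = canonWord fun r s => w.count (r, s) := by
  refine List.Perm.eq_of_pairwise (fun p q _ _ h h' => key_injective (le_antisymm h h'))
    hsorted (pairwise_canonWord _) (List.perm_iff_count.2 fun p => ?_)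
  rw [count_canonWord]
  split_ifs with hp
  · rfl
  · exact List.count_eq_zero.2 fun hmem => hp (hw p hmem)

variable {A : Type*}

def wordProd [Monoid A] (ξ : Fin n → Fin n → A) (w : List (Fin n × Fin n)) : A :=
  (w.map fun p => ξ p.1 p.2).prod

lemma orderedXiMono_eq_wordProd [Ring A] (ξ : Fin n → Fin n → A)
    (a : Fin n → Fin n → ℕ) :
    orderedXiMono ξ a = wordProd ξ (canonWord a) := by
  simp [orderedXiMono, wordProd, canonWord, letters, List.flatMap_def, List.prod_flatten,
    List.map_flatten, Function.comp_def]

lemma wordProd_append [Monoid A] (ξ : Fin n → Fin n → A) (u v : List (Fin n × Fin n)) :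
    wordProd ξ (u ++ v) = wordProd ξ u * wordProd ξ v := by
  simp [wordProd]

lemma mem_closure_iff_exists_wordProd [Monoid A] {ξ : Fin n → Fin n → A} {x : A} :
    x ∈ Submonoid.closure {x : A | ∃ r s : Fin n, r < s ∧ x = ξ r s} ↔
      ∃ w, IsWord w ∧ wordProd ξ w = x := by
  constructor
  · intro hx
    induction hx using Submonoid.closure_induction with
    | mem x hx =>
      obtain ⟨r, s, hrs, rfl⟩ := hx
      exact ⟨[(r, s)], by simpa [IsWord] using hrs, by simp [wordProd]⟩
    | one => exact ⟨[], by simp [IsWord], rfl⟩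
    | mul x y _ _ hx hy =>
      obtain ⟨u, hu, rfl⟩ := hx
      obtain ⟨v, hv, rfl⟩ := hy
      exact ⟨u ++ v, isWord_append.2 ⟨hu, hv⟩, wordProd_append ξ u v⟩
  · rintro ⟨w, hw, rfl⟩
    refine Submonoid.list_prod_mem _ fun y hy => ?_
    obtain ⟨p, hp, rfl⟩ := List.mem_map.1 hy
    exact Submonoid.subset_closure ⟨p.1, p.2, hw p hp, rfl⟩

lemma orderedXiMono_mem_closure [Ring A] (ξ : Fin n → Fin n → A)
    (a : Fin n → Fin n → ℕ) :
    orderedXiMono ξ a ∈ Submonoid.closure {x : A | ∃ r s : Fin n, r < s ∧ x = ξ r s} := by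
  rw [orderedXiMono_eq_wordProd]
  exact mem_closure_iff_exists_wordProd.2 ⟨_, isWord_canonWord a, rfl⟩

variable {K : Type*} [Field K] [Ring A] [Algebra K A]

structure Relations (ζ : K) (ξ : Fin n → Fin n → A) : Prop where
  rel1 : ∀ r s s' : Fin n, r < s → s < s' → ξ r s * ξ r s' = ζ • (ξ r s' * ξ r s)
  rel2 : ∀ r r' s : Fin n, r < r' → r' < s → ξ r s * ξ r' s = ζ • (ξ r' s * ξ r s)
  rel3 : ∀ r r' s' s : Fin n, r < r' → r' < s' → s' < s →
    ξ r s * ξ r' s' = ξ r' s' * ξ r s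
  rel3' : ∀ r s r' s' : Fin n, r < s → s < r' → r' < s' →
    ξ r s * ξ r' s' = ξ r' s' * ξ r s
  rel4 : ∀ r s s' : Fin n, r < s → s < s' →
    ξ r s * ξ s s' = ξ s s' * ξ r s + (ζ - ζ⁻¹) • ξ r s'
  rel5 : ∀ r r' s s' : Fin n, r < r' → r' < s → s < s' →
    ξ r s * ξ r' s' = ξ r' s' * ξ r s + (ζ - ζ⁻¹) • (ξ r' s * ξ r s')

variable (K) in
def spanBelow (ξ : Fin n → Fin n → A) (w : List (Fin n × Fin n)) : Submodule K A :=
  Submodule.span K (wordProd ξ '' {v | IsWord v ∧ List.Shortlex (key · < key ·) v w})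

lemma Relations.wordProd_pair_mem_spanBelow {ζ : K} {ξ : Fin n → Fin n → A}
    (h : Relations ζ ξ) (hζ : ζ ≠ 0) {a b : Fin n × Fin n} (ha : a.1 < a.2) (hb : b.1 < b.2)
    (hba : key b < key a) : wordProd ξ [a, b] ∈ spanBelow K ξ [a, b] := by
  have mem : ∀ v, IsWord v → List.Shortlex (key · < key ·) v [a, b] →
      wordProd ξ v ∈ spanBelow K ξ [a, b] :=
    fun v hv hlt => Submodule.subset_span ⟨v, ⟨hv, hlt⟩, rfl⟩
  have swapped := mem [b, a] (by simp [IsWord, ha, hb]) (.of_lex rfl (.rel hba))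
  obtain ⟨r, s⟩ := a
  obtain ⟨r', s'⟩ := b
  simp only [wordProd, List.map_cons, List.map_nil, List.prod_cons, List.prod_nil,
    mul_one] at swapped mem ⊢
  rcases key_lt_key_iff.1 hba with hr | ⟨rfl, hs⟩
  · rcases lt_trichotomy s r' with hsr | rfl | hrs
    · rwa [h.rel3' r s r' s' ha hsr hb]
    · rw [h.rel4 r s s' ha hb]
      refine add_mem swapped (Submodule.smul_mem _ _ ?_)
      simpa using mem [(r, s')] (by simpa [IsWord] using ha.trans hb)
        (.of_length_lt (by simp))
    · rcases lt_trichotomy s s' with hss | rfl | hss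
      · rw [h.rel5 r r' s s' hr hrs hss]
        refine add_mem swapped (Submodule.smul_mem _ _ ?_)
        simpa using mem [(r', s), (r, s')] (by simp [IsWord, hrs, ha.trans hss])
          (.of_lex rfl (.rel (key_lt_key_iff.2 (Or.inl hr))))
      · rw [h.rel2 r r' s hr hrs]
        exact Submodule.smul_mem _ _ swapped
      · rwa [h.rel3 r r' s' s hr hb hss]
  · rw [← (inv_smul_eq_iff₀ hζ).2 (h.rel1 _ s' s hb hs)]
    exact Submodule.smul_mem _ _ swapped

lemma Relations.wordProd_mem_span {ζ : K} {ξ : Fin n → Fin n → A} (h : Relations ζ ξ)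
    (hζ : ζ ≠ 0) {w : List (Fin n × Fin n)} (hw : IsWord w) :
    wordProd ξ w ∈ Submodule.span K (Set.range (orderedXiMono ξ)) := by
  induction w using (List.Shortlex.wf wellFounded_key_lt).induction with
  | _ w ih =>
    by_cases hsorted : w.IsChain (key · ≤ key ·)
    · rw [eq_canonWord_of_pairwise hw (List.isChain_iff_pairwise.1 hsorted),
        ← orderedXiMono_eq_wordProd]
      exact Submodule.subset_span ⟨_, rfl⟩
    obtain ⟨u, a, b, v, rfl, hab⟩ := List.exists_eq_append_of_not_isChain hsorted
    rw [show u ++ a :: b :: v = u ++ [a, b] ++ v by simp] at hw ih ⊢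
    let L := LinearMap.mulLeft K (wordProd ξ u) ∘ₗ LinearMap.mulRight K (wordProd ξ v)
    have hL : ∀ x, L (wordProd ξ x) = wordProd ξ (u ++ x ++ v) := by
      intro x
      simp [L, wordProd_append]
    have hpair := h.wordProd_pair_mem_spanBelow hζ (hw a (by simp)) (hw b (by simp))
      (not_le.1 hab)
    have hmem := Submodule.mem_map_of_mem (f := L) hpair
    rw [spanBelow, Submodule.map_span, hL] at hmem
    refine Submodule.span_le.2 ?_ hmem
    rintro _ ⟨_, ⟨x, ⟨hx, hlt⟩, rfl⟩, rfl⟩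
    rw [hL]
    have hlt' := (hlt.append_right_same v).append_left u
    rw [← List.append_assoc, ← List.append_assoc] at hlt'
    simp only [isWord_append] at hw
    exact ih _ hlt' (isWord_append.2 ⟨isWord_append.2 ⟨hw.1.1, hx⟩, hw.2⟩)

end QuantumUnipotent

/-- Given elements `ξ̃_{rs}` (`r < s`) of a `K`-algebra satisfying the quantized
coordinate-algebra relations of the unipotent radical in type `A_{n-1}`, the ordered
monomials (first index decreasing, second index increasing within each block) span
the algebra generated by the `ξ̃_{rs}` over `K`. -/
theorem stmt_11 (K : Type*) [Field K] (ζ : K) (hζ : ζ ≠ 0)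
    (A : Type*) [Ring A] [Algebra K A] (n : ℕ)
    (ξ : Fin n → Fin n → A)
    (rel1 : ∀ r s s' : Fin n, r < s → s < s' → ξ r s * ξ r s' = ζ • (ξ r s' * ξ r s))
    (rel2 : ∀ r r' s : Fin n, r < r' → r' < s → ξ r s * ξ r' s = ζ • (ξ r' s * ξ r s))
    (rel3 : ∀ r r' s' s : Fin n, r < r' → r' < s' → s' < s → ξ r s * ξ r' s' = ξ r' s' * ξ r s)
    (rel3' : ∀ r s r' s' : Fin n, r < s → s < r' → r' < s' → ξ r s * ξ r' s' = ξ r' s' * ξ r s)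
    (rel4 : ∀ r s s' : Fin n, r < s → s < s' →
      ξ r s * ξ s s' = ξ s s' * ξ r s + (ζ - ζ⁻¹) • ξ r s')
    (rel5 : ∀ r r' s s' : Fin n, r < r' → r' < s → s < s' →
      ξ r s * ξ r' s' = ξ r' s' * ξ r s + (ζ - ζ⁻¹) • (ξ r' s * ξ r s')) :
    Subalgebra.toSubmodule (Algebra.adjoin K {x : A | ∃ r s : Fin n, r < s ∧ x = ξ r s})
      = Submodule.span K {x : A | ∃ a : Fin n → Fin n → ℕ, x = orderedXiMono ξ a} := by
  have hrel : QuantumUnipotent.Relations ζ ξ := ⟨rel1, rel2, rel3, rel3', rel4, rel5⟩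
  have hmono : {x : A | ∃ a, x = orderedXiMono ξ a} = Set.range (orderedXiMono ξ) := by
    simp only [Set.range, eq_comm]
  rw [hmono, Algebra.adjoin_eq_span]
  refine le_antisymm (Submodule.span_le.2 fun x hx => ?_) (Submodule.span_le.2 ?_)
  · obtain ⟨w, hw, rfl⟩ := QuantumUnipotent.mem_closure_iff_exists_wordProd.1 hx
    exact hrel.wordProd_mem_span hζ hw
  · rintro _ ⟨a, rfl⟩
    exact Submodule.subset_span (QuantumUnipotent.orderedXiMono_mem_closure ξ a)
end

section
/- Let $\lambda = -(a-k)\epsilon_1 - \alpha_{1,j_1} - \cdots - \alpha_{1,j_k}$ where $0 \le k < a < n$ and $2 \le j_1 < \cdots < j_k \le n$, in the weight lattice of type $A_{n-1}$ (with $\langle\epsilon_1,\alpha_i^\vee\rangle = \delta_{i,1}$ and $\alpha_{1j} = \epsilon_1 - \epsilon_j$). Then there exists a positive root $\alpha \in \Delta^+$ with $\langle \lambda + \rho, \alpha^\vee\rangle = 0$, i.e., $\lambda$ lies on a wall for the dot action of the Weyl group. -/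
open Classical

/-- `ρ` for type `A_{n-1}`: `ρ_i = n - 1 - i` (0-based), so that
`⟨ρ, α_{rs}^∨⟩ = ρ_r - ρ_s = s - r`. -/
noncomputable def rhoA (n : ℕ) : Fin n → ℤ := fun i => (n : ℤ) - 1 - (i : ℤ)

/-- The weight `λ = -(a-k)ε_1 - α_{1,j_1} - ⋯ - α_{1,j_k} = -a ε_1 + ε_{j_1} + ⋯ + ε_{j_k}`
written in coordinates (0-based: `ε_1` is the 0-th coordinate vector). -/
noncomputable def lamWt (n a k : ℕ) (j : Fin k → Fin n) : Fin n → ℤ := fun i =>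
  (if (i : ℕ) = 0 then -(a : ℤ) else 0) + (if ∃ r, j r = i then 1 else 0)

/-- An injective function `Fin n → ℤ` with values in `[0, n-1]` has the same sum as
`Icc 0 (n-1)`. -/
lemma sum_of_inj_mem_Icc (n : ℕ) (g : Fin n → ℤ) (hinj : Function.Injective g)
    (hmem : ∀ i, g i ∈ Finset.Icc (0 : ℤ) ((n : ℤ) - 1)) :
    ∑ i, g i = ∑ x ∈ Finset.Icc (0 : ℤ) ((n : ℤ) - 1), x := by
  have himg : Finset.univ.image g = Finset.Icc (0 : ℤ) ((n : ℤ) - 1) := by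
    apply Finset.eq_of_subset_of_card_le
    · intro x hx
      simp only [Finset.mem_image, Finset.mem_univ, true_and] at hx
      obtain ⟨i, rfl⟩ := hx
      exact hmem i
    · rw [Finset.card_image_of_injective _ hinj, Finset.card_univ, Fintype.card_fin,
        Int.card_Icc]
      omega
  rw [← himg, Finset.sum_image (fun x _ y _ h => hinj h)]

/-- For `0 ≤ k < a < n` and `2 ≤ j_1 < ⋯ < j_k ≤ n` (0-based: `1 ≤ j_r`), the weight
`λ = -(a-k)ε_1 - α_{1 j_1} - ⋯ - α_{1 j_k}` is singular: some positive coroot pairs to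
zero with `λ + ρ`, i.e. `(λ+ρ)_r = (λ+ρ)_s` for some `r < s`. -/
theorem stmt_14 (n a k : ℕ) (hk : k < a) (ha : a < n)
    (j : Fin k → Fin n) (hmono : StrictMono j) (hj : ∀ r, 1 ≤ (j r : ℕ)) :
    ∃ r s : Fin n, r < s ∧
      lamWt n a k j r + rhoA n r = lamWt n a k j s + rhoA n s := by
  by_contra hcon
  push_neg at hcon
  set f : Fin n → ℤ := fun i => lamWt n a k j i + rhoA n i with hf
  have hinj : Function.Injective f := by
    intro r s h
    rcases lt_trichotomy r s with hlt | heq | hgt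
    · exact absurd h (hcon r s hlt)
    · exact heq
    · exact absurd h.symm (hcon s r hgt)
  have hmem : ∀ i, f i ∈ Finset.Icc (0 : ℤ) ((n : ℤ) - 1) := by
    intro i
    have hi := i.isLt
    simp only [hf, lamWt, rhoA, Finset.mem_Icc]
    by_cases h0 : (i : ℕ) = 0
    · have : ¬ ∃ r, j r = i := by
        rintro ⟨r, hr⟩
        have := hj r
        rw [hr, h0] at this
        omega
      simp only [h0, if_pos rfl, this, if_neg this]
      push_cast
      omega
    · simp only [if_neg h0]
      by_cases h1 : ∃ r, j r = i
      · simp only [if_pos h1]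
        have : 1 ≤ (i : ℕ) := by
          obtain ⟨r, hr⟩ := h1
          have := hj r; rw [hr] at this; exact this
        push_cast
        omega
      · simp only [if_neg h1]
        push_cast
        omega
  have hrinj : Function.Injective (rhoA n) := by
    intro r s h
    simp only [rhoA] at h
    have : (r : ℤ) = (s : ℤ) := by omega
    exact Fin.ext (by exact_mod_cast this)
  have hrmem : ∀ i, rhoA n i ∈ Finset.Icc (0 : ℤ) ((n : ℤ) - 1) := by
    intro i
    have hi := i.isLt
    simp only [rhoA, Finset.mem_Icc]
    push_cast
    omega
  have hsumf := sum_of_inj_mem_Icc n f hinj hmem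
  have hsumr := sum_of_inj_mem_Icc n (rhoA n) hrinj hrmem
  have hfr : ∑ i, f i = ∑ i, rhoA n i := hsumf.trans hsumr.symm
  -- now compute ∑ lamWt = k - a ≠ 0
  have hsplit : ∑ i, f i = (∑ i, lamWt n a k j i) + ∑ i, rhoA n i := by
    rw [← Finset.sum_add_distrib]
  have hlam0 : ∑ i, lamWt n a k j i = 0 := by
    have := hsplit.symm.trans hfr
    omega
  have hnpos : 0 < n := by omega
  have hlam : ∑ i, lamWt n a k j i = (k : ℤ) - a := by
    simp only [lamWt]
    rw [Finset.sum_add_distrib]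
    have h1 : ∑ i : Fin n, (if (i : ℕ) = 0 then -(a : ℤ) else 0) = -(a : ℤ) := by
      have : ∀ i : Fin n, ((i : ℕ) = 0) = (i = ⟨0, hnpos⟩) := by
        intro i
        simp [Fin.ext_iff]
      have inner : ∀ i : Fin n, (if (i : ℕ) = 0 then -(a : ℤ) else 0)
          = if i = ⟨0, hnpos⟩ then -(a : ℤ) else 0 := fun i => by simp only [this i]
      rw [Finset.sum_congr rfl (fun i _ => inner i)]
      simp
    have h2 : ∑ i : Fin n, (if ∃ r, j r = i then (1 : ℤ) else 0) = (k : ℤ) := by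
      rw [Finset.sum_boole]
      have : Finset.univ.filter (fun i : Fin n => ∃ r, j r = i)
          = Finset.univ.image j := by
        ext i
        simp [eq_comm]
      rw [this, Finset.card_image_of_injective _ hmono.injective]
      simp
    rw [h1, h2]
    ring
  rw [hlam] at hlam0
  omega
end
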